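/- Let n = 1 and define Q(z,χ,τ) := τ + 2izχ on ℂ × ℂ × ℂ (the complexified Lewy hypersurface). Then Q is a real normal defining function of dimension 1 which is finitely nondegenerate at 0. The quadruple f(z,w) := 2z/(1 − 2iz), g(z,w) := w/(1 − 2iz), f̃(χ,τ) := (χ + τ)/2, g̃(χ,τ) := τ, defined for (z,w), (χ,τ) near 0, is an HSPM sending (ℳ,0) into (ℳ,0), and satisfies ∂f/∂z(z,0) = 2/(1 − 2iz)² (a nonconstant function of z) while ∂f̃/∂χ(χ,0) ≡ 1/2 (a constant function of χ); in particular the Taylor expansions at 0 of ∂f/∂z(z,0) and ∂f̃/∂χ(χ,0) agree, up to conjugation of coefficients and a nonzero constant factor, only in their lowest-order terms. -/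

import Mathlib

open Filter Topology Complex

namespace HSPMpaper

variable {n : ℕ}

/-- Partial derivative of `F` in the `i`-th coordinate direction. -/
noncomputable def pd (i : Fin n) (F : (Fin n → ℂ) → ℂ) : (Fin n → ℂ) → ℂ :=
  fun z => fderiv ℂ F z (Pi.single i 1)

/-- Iterated partial derivative `∂^α` for a multi-index `α`. -/
noncomputable def mpd (α : Fin n → ℕ) (F : (Fin n → ℂ) → ℂ) : (Fin n → ℂ) → ℂ :=
  ((List.ofFn fun i : Fin n => (pd i)^[α i]).foldr (· ∘ ·) id) F

/-- Componentwise complex conjugation on `ℂⁿ`. -/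
def conjV (z : Fin n → ℂ) : Fin n → ℂ := fun i => starRingEnd ℂ (z i)

/-- The conjugate defining function `Q̄(χ,z,τ) = conj (Q (conj χ) (conj z) (conj τ))`. -/
def QBar (Q : (Fin n → ℂ) → (Fin n → ℂ) → ℂ → ℂ) : (Fin n → ℂ) → (Fin n → ℂ) → ℂ → ℂ :=
  fun χ z τ => starRingEnd ℂ (Q (conjV χ) (conjV z) (starRingEnd ℂ τ))

/-- `Q` is a normal defining function (of dimension `n`): holomorphic near the origin of
`ℂⁿ × ℂⁿ × ℂ` and satisfying `Q(0,χ,τ) = τ` and `Q(z,0,τ) = τ` near `0`. -/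
def IsNormalDF (Q : (Fin n → ℂ) → (Fin n → ℂ) → ℂ → ℂ) : Prop :=
  (∀ᶠ p in 𝓝 (0 : (Fin n → ℂ) × (Fin n → ℂ) × ℂ),
      AnalyticAt ℂ (fun q : (Fin n → ℂ) × (Fin n → ℂ) × ℂ => Q q.1 q.2.1 q.2.2) p) ∧
  (∀ᶠ p in 𝓝 (0 : (Fin n → ℂ) × (Fin n → ℂ) × ℂ),
      Q 0 p.2.1 p.2.2 = p.2.2 ∧ Q p.1 0 p.2.2 = p.2.2)

/-- `Q` is a real normal defining function: normal and `Q(z,χ,Q̄(χ,z,w)) = w` near `0`. -/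
def IsRealNormalDF (Q : (Fin n → ℂ) → (Fin n → ℂ) → ℂ → ℂ) : Prop :=
  IsNormalDF Q ∧
  ∀ᶠ p in 𝓝 (0 : (Fin n → ℂ) × (Fin n → ℂ) × ℂ),
    Q p.1 p.2.1 (QBar Q p.2.1 p.1 p.2.2) = p.2.2

/-- `(f,g,f̃,g̃)` is a holomorphic Segre preserving map sending `(ℳ,0)` into `(ℳ',0)`. -/
def IsHSPM (Q Q' : (Fin n → ℂ) → (Fin n → ℂ) → ℂ → ℂ)
    (f : (Fin n → ℂ) → ℂ → Fin n → ℂ) (g : (Fin n → ℂ) → ℂ → ℂ)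
    (ft : (Fin n → ℂ) → ℂ → Fin n → ℂ) (gt : (Fin n → ℂ) → ℂ → ℂ) : Prop :=
  (∀ᶠ p in 𝓝 (0 : (Fin n → ℂ) × ℂ), AnalyticAt ℂ (fun q : (Fin n → ℂ) × ℂ => f q.1 q.2) p) ∧
  (∀ᶠ p in 𝓝 (0 : (Fin n → ℂ) × ℂ), AnalyticAt ℂ (fun q : (Fin n → ℂ) × ℂ => g q.1 q.2) p) ∧
  (∀ᶠ p in 𝓝 (0 : (Fin n → ℂ) × ℂ), AnalyticAt ℂ (fun q : (Fin n → ℂ) × ℂ => ft q.1 q.2) p) ∧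
  (∀ᶠ p in 𝓝 (0 : (Fin n → ℂ) × ℂ), AnalyticAt ℂ (fun q : (Fin n → ℂ) × ℂ => gt q.1 q.2) p) ∧
  f 0 0 = 0 ∧ g 0 0 = 0 ∧ ft 0 0 = 0 ∧ gt 0 0 = 0 ∧
  ∀ᶠ p in 𝓝 (0 : (Fin n → ℂ) × (Fin n → ℂ) × ℂ),
    g p.1 (Q p.1 p.2.1 p.2.2) =
      Q' (f p.1 (Q p.1 p.2.1 p.2.2)) (ft p.2.1 p.2.2) (gt p.2.1 p.2.2)

/-- `M` is of finite type at `0`: `(z,χ) ↦ Q(z,χ,0)` does not vanish identically near `0`. -/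
def FiniteType (Q : (Fin n → ℂ) → (Fin n → ℂ) → ℂ → ℂ) : Prop :=
  ¬ ∀ᶠ p in 𝓝 (0 : (Fin n → ℂ) × (Fin n → ℂ)), Q p.1 p.2 0 = 0

/-- Jacobian matrix of `z ↦ f(z,0)` at `z`. -/
noncomputable def jacz (f : (Fin n → ℂ) → ℂ → Fin n → ℂ) (z : Fin n → ℂ) :
    Matrix (Fin n) (Fin n) ℂ :=
  Matrix.of fun i j => pd j (fun z' => f z' 0 i) z

/-- `ℋ` is Segre transversal to `ℳ'` at `0`: `∂g/∂w(0,0) ≠ 0`. -/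
noncomputable def SegreTransversal (g : (Fin n → ℂ) → ℂ → ℂ) : Prop :=
  deriv (fun w => g 0 w) 0 ≠ 0

/-- `ℋ` is totally Segre nondegenerate at `0`. -/
def TotallySegreNondeg (f ft : (Fin n → ℂ) → ℂ → Fin n → ℂ) : Prop :=
  (¬ ∀ᶠ z in 𝓝 (0 : Fin n → ℂ), (jacz f z).det = 0) ∧
  (¬ ∀ᶠ χ in 𝓝 (0 : Fin n → ℂ), (jacz ft χ).det = 0)

/-- `ℋ` is transversally null: `g ≡ 0` and `g̃ ≡ 0` near `0`. -/
def TransversallyNull (g gt : (Fin n → ℂ) → ℂ → ℂ) : Prop :=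
  (∀ᶠ p in 𝓝 (0 : (Fin n → ℂ) × ℂ), g p.1 p.2 = 0) ∧
  (∀ᶠ p in 𝓝 (0 : (Fin n → ℂ) × ℂ), gt p.1 p.2 = 0)

/-- The `k`-th coordinate direction in `ℂⁿ × ℂ`. -/
noncomputable def dirCT (n : ℕ) (k : Fin (n + 1)) : (Fin n → ℂ) × ℂ :=
  if h : (k : ℕ) < n then (Pi.single ⟨k, h⟩ 1, 0) else (0, 1)

/-- `M` is holomorphically nondegenerate at `0`: for some `K`, the map
`(χ,τ) ↦ (∂_z^α Q(0,χ,τ))_{|α| ≤ K}` has generic rank `n+1`. -/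
def HolNondeg (Q : (Fin n → ℂ) → (Fin n → ℂ) → ℂ → ℂ) : Prop :=
  ∃ K : ℕ, ∃ A : Fin (n + 1) → Fin n → ℕ, (∀ j, (∑ i, A j i) ≤ K) ∧
    ¬ ∀ᶠ p in 𝓝 (0 : (Fin n → ℂ) × ℂ),
      (Matrix.of fun j k : Fin (n + 1) =>
        fderiv ℂ (fun q : (Fin n → ℂ) × ℂ => mpd (A j) (fun z => Q z q.1 q.2) 0) p
          (dirCT n k)).det = 0

/-- `M` is of class `𝒞` at `0`: for some `K`, the map
`χ ↦ (∂_z^α Q(0,χ,0))_{|α| ≤ K}` has generic rank `n`. -/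
def ClassC (Q : (Fin n → ℂ) → (Fin n → ℂ) → ℂ → ℂ) : Prop :=
  ∃ K : ℕ, ∃ A : Fin n → Fin n → ℕ, (∀ j, (∑ i, A j i) ≤ K) ∧
    ¬ ∀ᶠ χ in 𝓝 (0 : Fin n → ℂ),
      (Matrix.of fun j k : Fin n =>
        pd k (fun χ' => mpd (A j) (fun z => Q z χ' 0) 0) χ).det = 0

/-- `M` is finitely nondegenerate at `0`: for some `K`, the vectors
`∂_χ ∂_z^α Q(0,0,0)`, `|α| ≤ K`, span `ℂⁿ`. -/
def FinNondeg (Q : (Fin n → ℂ) → (Fin n → ℂ) → ℂ → ℂ) : Prop :=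
  ∃ K : ℕ, Submodule.span ℂ
    {v : Fin n → ℂ | ∃ α : Fin n → ℕ, (∑ i, α i) ≤ K ∧
      v = fun i => pd i (fun χ => mpd α (fun z => Q z χ 0) 0) 0} = ⊤

/-- Full Jacobian matrix of `(z,w) ↦ (f(z,w), g(z,w))` at `p ∈ ℂⁿ × ℂ`. -/
noncomputable def jacFull (f : (Fin n → ℂ) → ℂ → Fin n → ℂ) (g : (Fin n → ℂ) → ℂ → ℂ)
    (p : (Fin n → ℂ) × ℂ) : Matrix (Fin (n + 1)) (Fin (n + 1)) ℂ :=
  Matrix.of fun i k =>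
    fderiv ℂ (fun q : (Fin n → ℂ) × ℂ => (Fin.snoc (f q.1 q.2) (g q.1 q.2) : Fin (n + 1) → ℂ) i) p (dirCT n k)

/-- The degree-`d` homogeneous term of the Taylor series of `φ` at `0`. -/
noncomputable def homogTerm (d : ℕ) (φ : (Fin n → ℂ) → ℂ) : (Fin n → ℂ) → ℂ :=
  fun z => iteratedFDeriv ℂ d φ 0 (fun _ => z) / (d.factorial : ℂ)

/-- The order of vanishing of `φ` at `0`. -/
noncomputable def vanishOrder (φ : (Fin n → ℂ) → ℂ) : ℕ :=
  sInf {d | homogTerm d φ ≠ 0}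


/-! Everything is an explicit computation. `Q̄(χ,z,w) = w - 2izχ`, so `Q` is real. The
Segre-preserving identity is `τ (1 - 2iz) + 2iz (χ + τ) = τ + 2izχ`, divided by `1 - 2iz`.
Finally `2 / (1 - 2it)² = 2` forces `t (t + i) = 0`, so near `0` the function
`∂f/∂z(z,0) = 2 / (1 - 2iz)²` is not constant, whereas `∂f̃/∂χ(χ,0) ≡ 1/2`. -/

theorem pd_apply_eq_of_hasDerivAt {φ : ℂ → ℂ} {c : ℂ} {i : Fin n} {z : Fin n → ℂ}
    (h : HasDerivAt φ c (z i)) : pd i (fun z' => φ (z' i)) z = c := by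
  have hφ : HasFDerivAt (fun z' => φ (z' i))
      (c • ContinuousLinearMap.proj (R := ℂ) (φ := fun _ : Fin n => ℂ) i) z :=
    h.comp_hasFDerivAt z (hasFDerivAt_apply i z)
  simp [pd, hφ.fderiv]

theorem mpd_fin_one_one (F : (Fin 1 → ℂ) → ℂ) : mpd (fun _ => 1) F = pd 0 F := by
  simp [mpd, List.ofFn_succ]

theorem finNondeg_of_ne_zero {Q : (Fin 1 → ℂ) → (Fin 1 → ℂ) → ℂ → ℂ} (α : Fin 1 → ℕ)
    (h : (fun i => pd i (fun χ => mpd α (fun z => Q z χ 0) 0) 0) ≠ 0) : FinNondeg Q := by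
  refine ⟨∑ i, α i, eq_top_iff.2 ?_⟩
  calc ⊤ = ℂ ∙ (fun i => pd i (fun χ => mpd α (fun z => Q z χ 0) 0) 0) :=
        (Submodule.eq_top_of_finrank_eq (by simp [finrank_span_singleton h])).symm
    _ ≤ _ := Submodule.span_mono (by rintro _ rfl; exact ⟨α, le_rfl, rfl⟩)

theorem analyticAt_apply {𝕜 ι : Type*} [NontriviallyNormedField 𝕜] [Fintype ι] (i : ι)
    (x : ι → 𝕜) : AnalyticAt 𝕜 (fun y : ι → 𝕜 => y i) x :=
  (ContinuousLinearMap.proj (R := 𝕜) (φ := fun _ : ι => 𝕜) i).analyticAt x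

attribute [local fun_prop] analyticAt_fst analyticAt_snd analyticAt_apply

def lewyQ : (Fin 1 → ℂ) → (Fin 1 → ℂ) → ℂ → ℂ := fun z χ τ => τ + 2 * I * (z 0 * χ 0)

noncomputable def lewyF : (Fin 1 → ℂ) → ℂ → Fin 1 → ℂ :=
  fun z _ _ => 2 * z 0 / (1 - 2 * I * z 0)

noncomputable def lewyG : (Fin 1 → ℂ) → ℂ → ℂ := fun z w => w / (1 - 2 * I * z 0)

noncomputable def lewyFt : (Fin 1 → ℂ) → ℂ → Fin 1 → ℂ := fun χ τ _ => (χ 0 + τ) / 2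

def lewyGt : (Fin 1 → ℂ) → ℂ → ℂ := fun _ τ => τ

theorem isRealNormalDF_lewyQ : IsRealNormalDF lewyQ := by
  refine ⟨⟨.of_forall fun p => by unfold lewyQ; fun_prop, .of_forall fun p => by simp [lewyQ]⟩,
    .of_forall fun p => ?_⟩
  simp only [lewyQ, QBar, conjV, map_add, map_mul, conj_I, conj_conj, map_ofNat]
  ring

theorem finNondeg_lewyQ : FinNondeg lewyQ := by
  have hz : (fun χ : Fin 1 → ℂ => mpd (fun _ => 1) (fun z => lewyQ z χ 0) 0) =
      fun χ => 2 * I * χ 0 := by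
    funext χ
    rw [mpd_fin_one_one]
    exact pd_apply_eq_of_hasDerivAt (φ := fun t => 0 + 2 * I * (t * χ 0))
      (by simpa using ((hasDerivAt_id _).mul_const (χ 0)).const_mul (2 * I) |>.const_add 0)
  refine finNondeg_of_ne_zero (fun _ => 1) fun h => ?_
  have hχ := congrFun h 0
  rw [hz, pd_apply_eq_of_hasDerivAt (φ := fun t => 2 * I * t) ((hasDerivAt_id _).const_mul _)]
    at hχ
  simp at hχ

theorem eventually_one_sub_two_I_mul_ne_zero {X : Type*} [TopologicalSpace X] [Zero X]
    {u : X → ℂ} (hu : Continuous u) (h0 : u 0 = 0) : ∀ᶠ x in 𝓝 (0 : X), 1 - 2 * I * u x ≠ 0 :=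
  (by fun_prop : Continuous fun x => 1 - 2 * I * u x).continuousAt.eventually_ne (by simp [h0])

theorem isHSPM_lewy : IsHSPM lewyQ lewyQ lewyF lewyG lewyFt lewyGt := by
  have hU := eventually_one_sub_two_I_mul_ne_zero (X := (Fin 1 → ℂ) × ℂ) (u := fun p => p.1 0)
    (by fun_prop) rfl
  refine ⟨hU.mono fun p hp => .pi fun _ => by unfold lewyF; fun_prop (disch := assumption),
    hU.mono fun p hp => by unfold lewyG; fun_prop (disch := assumption),
    .of_forall fun p => .pi fun _ => by unfold lewyFt; fun_prop,
    .of_forall fun p => by unfold lewyGt; fun_prop,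
    by ext; simp [lewyF], by simp [lewyG], by ext; simp [lewyFt], rfl, ?_⟩
  filter_upwards [eventually_one_sub_two_I_mul_ne_zero
    (X := (Fin 1 → ℂ) × (Fin 1 → ℂ) × ℂ) (u := fun p => p.1 0) (by fun_prop) rfl] with p hp
  simp only [lewyQ, lewyF, lewyG, lewyFt, lewyGt]
  field_simp
  ring

theorem pd_lewyF {z : Fin 1 → ℂ} (hz : 1 - 2 * I * z 0 ≠ 0) :
    pd 0 (fun z' => lewyF z' 0 0) z = 2 / (1 - 2 * I * z 0) ^ 2 := by
  have hnum : HasDerivAt (fun t : ℂ => 2 * t) 2 (z 0) := by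
    simpa using (hasDerivAt_id _).const_mul (2 : ℂ)
  have hden : HasDerivAt (fun t : ℂ => 1 - 2 * I * t) (-(2 * I)) (z 0) := by
    simpa using ((hasDerivAt_id _).const_mul (2 * I)).const_sub 1
  change pd 0 (fun z' => 2 * z' 0 / (1 - 2 * I * z' 0)) z = _
  rw [pd_apply_eq_of_hasDerivAt (φ := fun t => 2 * t / (1 - 2 * I * t)) (hnum.div hden hz)]
  field_simp
  ring

theorem pd_lewyFt (χ : Fin 1 → ℂ) : pd 0 (fun χ' => lewyFt χ' 0 0) χ = 1 / 2 :=
  pd_apply_eq_of_hasDerivAt (φ := fun t : ℂ => (t + 0) / 2)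
    (by simpa using ((hasDerivAt_id (χ 0)).add_const (0 : ℂ)).div_const (2 : ℂ))

theorem not_eventually_const_two_div_sq :
    ¬ ∃ c : ℂ, ∀ᶠ t in 𝓝 (0 : ℂ), 2 / (1 - 2 * I * t) ^ 2 = c := by
  rintro ⟨c, hc⟩
  obtain rfl : 2 = c := by simpa using hc.self_of_nhds
  have hcI := hc.and (eventually_ne_nhds (show (0 : ℂ) ≠ -I by simp))
  obtain ⟨t, ⟨ht, htI⟩, ht0⟩ :=
    (hcI.filter_mono nhdsWithin_le_nhds |>.and self_mem_nhdsWithin).exists (f := 𝓝[≠] 0)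
  have hsq : (1 - 2 * I * t) ^ 2 = 1 := by
    have hne : (1 - 2 * I * t) ^ 2 ≠ 0 := fun h => by simp [h] at ht
    linear_combination -(div_eq_iff hne).1 ht / 2
  have : t * (t + I) = 0 := by linear_combination (-1 / 4) * hsq + t ^ 2 * I_sq
  rcases mul_eq_zero.1 this with h | h
  · exact ht0 h
  · exact htI (eq_neg_of_add_eq_zero_left h)

/-- Example 3.4: an explicit HSPM of the complexified Lewy hypersurface
`Q(z,χ,τ) = τ + 2izχ` into itself, with `∂f/∂z(z,0) = 2/(1-2iz)²` and `∂f̃/∂χ(χ,0) ≡ 1/2`, so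
that the Taylor expansions of the two determinants agree (up to conjugation and a nonzero
constant) only in their lowest-order terms. -/
theorem statement16 :
    let Q : (Fin 1 → ℂ) → (Fin 1 → ℂ) → ℂ → ℂ :=
      fun z χ τ => τ + 2 * Complex.I * (z 0 * χ 0)
    let f : (Fin 1 → ℂ) → ℂ → Fin 1 → ℂ :=
      fun z _ => fun _ => 2 * z 0 / (1 - 2 * Complex.I * z 0)
    let g : (Fin 1 → ℂ) → ℂ → ℂ := fun z w => w / (1 - 2 * Complex.I * z 0)
    let ft : (Fin 1 → ℂ) → ℂ → Fin 1 → ℂ := fun χ τ => fun _ => (χ 0 + τ) / 2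
    let gt : (Fin 1 → ℂ) → ℂ → ℂ := fun _ τ => τ
    IsRealNormalDF Q ∧ FinNondeg Q ∧
    IsHSPM Q Q f g ft gt ∧
    (∀ᶠ z in 𝓝 (0 : Fin 1 → ℂ),
      pd 0 (fun z' => f z' 0 0) z = 2 / (1 - 2 * Complex.I * z 0) ^ 2) ∧
    (∀ᶠ χ in 𝓝 (0 : Fin 1 → ℂ), pd 0 (fun χ' => ft χ' 0 0) χ = 1 / 2) ∧
    (∃ c : ℂ, c ≠ 0 ∧
      pd 0 (fun z' => f z' 0 0) 0 = c * starRingEnd ℂ (pd 0 (fun χ' => ft χ' 0 0) 0)) ∧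
    (¬ ∃ c : ℂ, ∀ᶠ z in 𝓝 (0 : Fin 1 → ℂ),
      pd 0 (fun z' => f z' 0 0) z = c * starRingEnd ℂ (pd 0 (fun χ' => ft χ' 0 0) (conjV z))) := by
  intro Q f g ft gt
  have hf : ∀ᶠ z in 𝓝 (0 : Fin 1 → ℂ),
      pd 0 (fun z' => f z' 0 0) z = 2 / (1 - 2 * I * z 0) ^ 2 :=
    (eventually_one_sub_two_I_mul_ne_zero (u := fun z : Fin 1 → ℂ => z 0) (by fun_prop)
      rfl).mono fun _ => pd_lewyF
  have hft : ∀ χ, pd 0 (fun χ' => ft χ' 0 0) χ = 1 / 2 := pd_lewyFt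
  refine ⟨isRealNormalDF_lewyQ, finNondeg_lewyQ, isHSPM_lewy, hf, .of_forall hft,
    ⟨4, by norm_num, ?_⟩,
    fun ⟨c, hc⟩ => not_eventually_const_two_div_sq ⟨c * starRingEnd ℂ (1 / 2), ?_⟩⟩
  · rw [hf.self_of_nhds, hft]
    norm_num [map_ofNat]
  · have hdiag : Tendsto (fun t : ℂ => fun _ : Fin 1 => t) (𝓝 0) (𝓝 0) :=
      tendsto_pi_nhds.2 fun _ => tendsto_id
    filter_upwards [hdiag.eventually (hf.and hc)] with t ⟨hft_t, hc_t⟩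
    rw [← hft_t, hc_t, hft]

end HSPMpaper
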